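/- Let I ⊆ ℝ. The set {(ε₁ e^{-r}, ε₂ e^{r})/√(2 cosh 2r) : r ∈ I, ε₁, ε₂ ∈ {±1}} is dense in the unit circle of ℝ² if and only if I is dense in ℝ. -/

import Mathlib

/-!
The vector `(e^{-r}, e^r) / √(2 cosh 2r)` is `(cos θ, sin θ)` with `θ = arctan e^{2r}`, and
`r ↦ θ` maps `ℝ` homeomorphically onto `(0, π/2)`. Hence the points with `ε₁ = ε₂ = 1` form a
topologically embedded copy of `I` in the open quarter circle, whose closure contains the closed
quarter circle exactly when `I` is dense. The sign choices reflect the quarter circle onto the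
whole circle, and conversely the open first quadrant is a neighbourhood of the quarter circle
that meets only the unreflected copy.
-/

open Real Set Topology

def signFlips (s : Set (ℝ × ℝ)) : Set (ℝ × ℝ) :=
  {x | ∃ p ∈ s, ∃ ε₁ : ℝ, (ε₁ = 1 ∨ ε₁ = -1) ∧ ∃ ε₂ : ℝ, (ε₂ = 1 ∨ ε₂ = -1) ∧
    x = (ε₁ * p.1, ε₂ * p.2)}

lemma signFlips_mono : Monotone signFlips := by
  rintro s t hst _ ⟨p, hp, hε⟩
  exact ⟨p, hst hp, hε⟩

lemma signFlips_closure_subset (s : Set (ℝ × ℝ)) :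
    signFlips (closure s) ⊆ closure (signFlips s) := by
  rintro _ ⟨p, hp, ε₁, hε₁, ε₂, hε₂, rfl⟩
  have hflip : Continuous fun q : ℝ × ℝ => (ε₁ * q.1, ε₂ * q.2) := by fun_prop
  refine closure_mono ?_ (image_closure_subset_closure_image hflip ⟨p, hp, rfl⟩)
  rintro _ ⟨q, hq, rfl⟩
  exact ⟨q, hq, ε₁, hε₁, ε₂, hε₂, rfl⟩

lemma posQuadrant_inter_signFlips_subset {s : Set (ℝ × ℝ)} (hs : ∀ p ∈ s, 0 < p.1 ∧ 0 < p.2) :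
    {x : ℝ × ℝ | 0 < x.1 ∧ 0 < x.2} ∩ signFlips s ⊆ s := by
  rintro _ ⟨hx, p, hp, ε₁, hε₁, ε₂, hε₂, rfl⟩
  obtain ⟨hp₁, hp₂⟩ := hs p hp
  obtain rfl | rfl := hε₁ <;> obtain rfl | rfl := hε₂
  · simpa only [one_mul] using hp
  all_goals linarith [hx.1, hx.2]

lemma unitCircle_subset_signFlips :
    {x : ℝ × ℝ | x.1 ^ 2 + x.2 ^ 2 = 1} ⊆
      signFlips {x : ℝ × ℝ | x.1 ^ 2 + x.2 ^ 2 = 1 ∧ 0 ≤ x.1 ∧ 0 ≤ x.2} := by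
  have hsign (a : ℝ) : ∃ ε : ℝ, (ε = 1 ∨ ε = -1) ∧ a = ε * |a| := by
    rcases le_or_gt 0 a with ha | ha
    · exact ⟨1, .inl rfl, by rw [abs_of_nonneg ha, one_mul]⟩
    · exact ⟨-1, .inr rfl, by rw [abs_of_neg ha]; ring⟩
  rintro ⟨a, b⟩ (hab : a ^ 2 + b ^ 2 = 1)
  obtain ⟨ε₁, hε₁, ha⟩ := hsign a
  obtain ⟨ε₂, hε₂, hb⟩ := hsign b
  exact ⟨(|a|, |b|), ⟨by simpa only [sq_abs] using hab, abs_nonneg a, abs_nonneg b⟩,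
    ε₁, hε₁, ε₂, hε₂, Prod.ext ha hb⟩

noncomputable def squeezedAngle (r : ℝ) : ℝ := arctan (exp (2 * r))

noncomputable def squeezedDirection (r : ℝ) : ℝ × ℝ :=
  (exp (-r) / √(2 * cosh (2 * r)), exp r / √(2 * cosh (2 * r)))

lemma sqrt_two_mul_cosh_two_mul (r : ℝ) :
    √(2 * cosh (2 * r)) = exp (-r) * √(1 + exp (2 * r) ^ 2) := by
  have h : 2 * cosh (2 * r) = exp (-r) ^ 2 * (1 + exp (2 * r) ^ 2) := by
    rw [cosh_eq, ← exp_nat_mul, ← exp_nat_mul, mul_add, mul_one, ← exp_add]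
    push_cast
    ring_nf
  rw [h, sqrt_mul (by positivity), sqrt_sq (exp_pos _).le]

lemma squeezedDirection_eq (r : ℝ) :
    squeezedDirection r = (cos (squeezedAngle r), sin (squeezedAngle r)) := by
  have hr := (exp_pos (-r)).ne'
  rw [squeezedDirection, squeezedAngle, cos_arctan, sin_arctan, sqrt_two_mul_cosh_two_mul,
    show exp (2 * r) = exp r / exp (-r) by rw [← exp_sub]; ring_nf]
  ext <;> field_simp

lemma squeezedAngle_strictMono : StrictMono squeezedAngle :=
  arctan_strictMono.comp (exp_strictMono.comp (strictMono_mul_left_of_pos two_pos))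

lemma continuous_squeezedAngle : Continuous squeezedAngle := by
  unfold squeezedAngle; fun_prop

lemma range_squeezedAngle : range squeezedAngle = Ioo 0 (π / 2) := by
  refine Subset.antisymm ?_ fun t ht => ⟨log (tan t) / 2, ?_⟩
  · rintro _ ⟨r, rfl⟩
    exact ⟨arctan_pos.2 (exp_pos _), arctan_lt_pi_div_two _⟩
  · rw [squeezedAngle, mul_div_cancel₀ _ two_ne_zero,
      exp_log (tan_pos_of_pos_of_lt_pi_div_two ht.1 ht.2),
      arctan_tan (by linarith [ht.1, pi_pos]) ht.2]

lemma continuous_squeezedDirection : Continuous squeezedDirection := by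
  simp only [funext squeezedDirection_eq]
  exact (continuous_cos.comp continuous_squeezedAngle).prodMk
    (continuous_sin.comp continuous_squeezedAngle)

lemma isEmbedding_squeezedDirection : IsEmbedding squeezedDirection := by
  have hmono : StrictMono (sin ∘ squeezedAngle) := fun r s hrs => by
    have hr := range_squeezedAngle ▸ mem_range_self (f := squeezedAngle) r
    have hs := range_squeezedAngle ▸ mem_range_self (f := squeezedAngle) s
    exact strictMonoOn_sin ⟨by linarith [hr.1, pi_pos], hr.2.le⟩
      ⟨by linarith [hs.1, pi_pos], hs.2.le⟩ (squeezedAngle_strictMono hrs)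
  have hcont : Continuous (sin ∘ squeezedAngle) := continuous_sin.comp continuous_squeezedAngle
  refine .of_comp continuous_squeezedDirection continuous_snd ?_
  rw [show Prod.snd ∘ squeezedDirection = sin ∘ squeezedAngle by
    ext r; simp [squeezedDirection_eq]]
  exact hmono.isEmbedding_of_ordConnected
    (isPreconnected_iff_ordConnected.1 (isPreconnected_range hcont))

lemma squeezedDirection_pos (r : ℝ) :
    0 < (squeezedDirection r).1 ∧ 0 < (squeezedDirection r).2 := by
  constructor <;> simp only [squeezedDirection] <;> positivity

lemma unitCircle_inter_quadrant_subset_closure_range :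
    {x : ℝ × ℝ | x.1 ^ 2 + x.2 ^ 2 = 1 ∧ 0 ≤ x.1 ∧ 0 ≤ x.2} ⊆
      closure (range squeezedDirection) := by
  rintro ⟨a, b⟩ ⟨hab, ha, hb⟩
  have hcs : Continuous fun t : ℝ => (cos t, sin t) := by fun_prop
  have hrange : range squeezedDirection = (fun t => (cos t, sin t)) '' Ioo 0 (π / 2) := by
    rw [← range_squeezedAngle, ← range_comp]
    exact congrArg range (funext squeezedDirection_eq)
  rw [hrange]
  refine image_closure_subset_closure_image hcs ⟨arccos a, ?_, ?_⟩
  · rw [closure_Ioo pi_div_two_pos.ne]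
    exact ⟨arccos_nonneg a, arccos_le_pi_div_two.2 ha⟩
  · have ha1 : a ≤ 1 := by nlinarith
    simp only [cos_arccos (by linarith) ha1, sin_arccos, Prod.mk.injEq, true_and]
    rw [show 1 - a ^ 2 = b ^ 2 by linarith, sqrt_sq hb]

lemma squeezedDirection_fst_sq_add_snd_sq (r : ℝ) :
    (squeezedDirection r).1 ^ 2 + (squeezedDirection r).2 ^ 2 = 1 := by
  rw [squeezedDirection_eq, cos_sq_add_sin_sq]

lemma setOf_signed_squeezedDirection_eq (I : Set ℝ) :
    {x : ℝ × ℝ | ∃ r ∈ I, ∃ ε₁ : ℝ, (ε₁ = 1 ∨ ε₁ = -1) ∧ ∃ ε₂ : ℝ, (ε₂ = 1 ∨ ε₂ = -1) ∧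
      x = (ε₁ * exp (-r) / √(2 * cosh (2 * r)), ε₂ * exp r / √(2 * cosh (2 * r)))} =
      signFlips (squeezedDirection '' I) := by
  ext x
  simp [signFlips, squeezedDirection, mul_div_assoc]

theorem squeezed_quadratures_dense_iff (I : Set ℝ) :
    ({x : ℝ × ℝ | x.1 ^ 2 + x.2 ^ 2 = 1} ⊆
        closure {x : ℝ × ℝ | ∃ r ∈ I, ∃ ε₁ : ℝ, (ε₁ = 1 ∨ ε₁ = -1) ∧
          ∃ ε₂ : ℝ, (ε₂ = 1 ∨ ε₂ = -1) ∧
          x = (ε₁ * Real.exp (-r) / Real.sqrt (2 * Real.cosh (2 * r)),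
               ε₂ * Real.exp r / Real.sqrt (2 * Real.cosh (2 * r)))}) ↔
      Dense I := by
  rw [setOf_signed_squeezedDirection_eq]
  constructor
  · intro h
    refine isEmbedding_squeezedDirection.isInducing.dense_iff.2 fun r => ?_
    have hQ : IsOpen {x : ℝ × ℝ | 0 < x.1 ∧ 0 < x.2} :=
      (isOpen_lt continuous_const continuous_fst).inter (isOpen_lt continuous_const continuous_snd)
    refine closure_mono (posQuadrant_inter_signFlips_subset ?_)
      (hQ.inter_closure ⟨squeezedDirection_pos r, h (squeezedDirection_fst_sq_add_snd_sq r)⟩)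
    rintro _ ⟨s, -, rfl⟩
    exact squeezedDirection_pos s
  · intro hI
    calc {x : ℝ × ℝ | x.1 ^ 2 + x.2 ^ 2 = 1}
        ⊆ signFlips {x : ℝ × ℝ | x.1 ^ 2 + x.2 ^ 2 = 1 ∧ 0 ≤ x.1 ∧ 0 ≤ x.2} :=
          unitCircle_subset_signFlips
      _ ⊆ signFlips (closure (squeezedDirection '' I)) :=
          signFlips_mono (unitCircle_inter_quadrant_subset_closure_range.trans
            (closure_minimal (continuous_squeezedDirection.range_subset_closure_image_dense hI)
              isClosed_closure))
      _ ⊆ closure (signFlips (squeezedDirection '' I)) := signFlips_closure_subset _
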